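/- arXiv:1603.04964 — 3 statements merged into one kernel-verified Lean document; each statement's English description precedes it below -/
import Mathlib

section
/- Let μ be a Borel probability measure on (S, d) with ∫ (p₁² + p₂²) μ(d(p₁, p₂, θ)) < ∞. Define F(x̂) = ∫_S d(x, x̂)² μ(dx), p̂₁ = ∫ p₁ dμ, p̂₂ = ∫ p₂ dμ, c̄ = ∫ cos θ dμ, s̄ = ∫ sin θ dμ, and α = c̄² + s̄². If α > 0, then there is a unique θ̂ ∈ [0, 2π) with cos θ̂ = c̄/√α and sin θ̂ = s̄/√α, and the point x̂* = (p̂₁, p̂₂, θ̂) minimizes F over S: F(x̂*) ≤ F(ŷ) for every ŷ ∈ S. -/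
/-!
Write `ŷ = (q, φ)`. Expanding the square and using `cos² + sin² = 1`,
`F(ŷ) = ∫ (p₁² + p₂²) dμ + |q - p̂|² - |p̂|² + 4 - 4 (c̄ cos φ + s̄ sin φ)`.
The translation part is minimal at `q = p̂`, and by Cauchy–Schwarz
`c̄ cos φ + s̄ sin φ ≤ √α`, with equality at `φ = θ̂`. The angle `θ̂` exists and is unique
because `(cos, sin)` is a bijection from `[0, 2π)` onto the unit circle.
-/

open MeasureTheory
open scoped ENNReal

noncomputable section

/-- The state space `S = ℝ² × [0, 2π)`. -/
abbrev S : Type := {x : ℝ × ℝ × ℝ // x.2.2 ∈ Set.Ico (0 : ℝ) (2 * Real.pi)}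

/-- The metric `d` on `S`. -/
noncomputable def dS (x y : S) : ℝ :=
  Real.sqrt ((x.1.1 - y.1.1) ^ 2 + (x.1.2.1 - y.1.2.1) ^ 2
    + 2 * (Real.cos x.1.2.2 - Real.cos y.1.2.2) ^ 2
    + 2 * (Real.sin x.1.2.2 - Real.sin y.1.2.2) ^ 2)

/-- The distortion functional `F(x̂) = ∫ d(x, x̂)² μ(dx)`. -/
noncomputable def FF (μ : Measure S) (z : S) : ℝ≥0∞ :=
  ∫⁻ x, ENNReal.ofReal (dS x z ^ 2) ∂μ

open Real Set

theorem eq_of_mem_Ico_of_cos_eq_of_sin_eq {a b : ℝ} (ha : a ∈ Ico 0 (2 * π))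
    (hb : b ∈ Ico 0 (2 * π)) (hcos : cos a = cos b) (hsin : sin a = sin b) : a = b := by
  have : Fact (0 < 2 * π) := ⟨two_pi_pos⟩
  rw [← zero_add (2 * π)] at ha hb
  exact (AddCircle.coe_eq_coe_iff_of_mem_Ico ha hb).1 (Angle.cos_sin_inj hcos hsin)

theorem exists_mem_Ico_cos_eq_sin_eq {c s : ℝ} (h : c ^ 2 + s ^ 2 = 1) :
    ∃ θ ∈ Ico 0 (2 * π), cos θ = c ∧ sin θ = s := by
  have hz : ‖(⟨c, s⟩ : ℂ)‖ = 1 := by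
    rw [Complex.norm_def, Complex.normSq_mk, ← sq, ← sq, h, Real.sqrt_one]
  have hz0 : (⟨c, s⟩ : ℂ) ≠ 0 := by rintro h0; simp [h0] at hz
  set ψ : ℝ := Complex.arg ⟨c, s⟩
  have hθ : toIcoMod two_pi_pos 0 ψ = ψ - toIcoDiv two_pi_pos 0 ψ * (2 * π) := by
    rw [← self_sub_toIcoMod_eq_mul, sub_sub_cancel]
  refine ⟨toIcoMod two_pi_pos 0 ψ, toIcoMod_mem_Ico' two_pi_pos ψ, ?_, ?_⟩
  · rw [hθ, cos_sub_int_mul_two_pi, Complex.cos_arg hz0, hz, div_one]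
  · rw [hθ, sin_sub_int_mul_two_pi, Complex.sin_arg, hz, div_one]

theorem existsUnique_mem_Ico_cos_eq_sin_eq {c s : ℝ} (h : c ^ 2 + s ^ 2 = 1) :
    ∃! θ : ℝ, θ ∈ Ico 0 (2 * π) ∧ cos θ = c ∧ sin θ = s := by
  obtain ⟨θ, hθ, hc, hs⟩ := exists_mem_Ico_cos_eq_sin_eq h
  exact ⟨θ, ⟨hθ, hc, hs⟩, fun θ' ⟨hθ', hc', hs'⟩ ↦
    eq_of_mem_Ico_of_cos_eq_of_sin_eq hθ' hθ (hc'.trans hc.symm) (hs'.trans hs.symm)⟩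

theorem div_sqrt_sq_add_div_sqrt_sq_eq_one {c s : ℝ} (h : 0 < c ^ 2 + s ^ 2) :
    (c / √(c ^ 2 + s ^ 2)) ^ 2 + (s / √(c ^ 2 + s ^ 2)) ^ 2 = 1 := by
  rw [div_pow, div_pow, ← add_div, sq_sqrt h.le, div_self h.ne']

theorem cos_mul_add_sin_mul_le_sqrt (θ c s : ℝ) : cos θ * c + sin θ * s ≤ √(c ^ 2 + s ^ 2) :=
  (le_abs_self _).trans <| abs_le_sqrt <| by
    nlinarith [sq_nonneg (cos θ * s - sin θ * c), sin_sq_add_cos_sq θ]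

theorem cos_mul_add_sin_mul_eq_sqrt {θ c s : ℝ} (h : 0 < c ^ 2 + s ^ 2)
    (hc : cos θ = c / √(c ^ 2 + s ^ 2)) (hs : sin θ = s / √(c ^ 2 + s ^ 2)) :
    cos θ * c + sin θ * s = √(c ^ 2 + s ^ 2) := by
  have := sqrt_pos.2 h
  rw [hc, hs]
  field_simp
  rw [sq_sqrt h.le]

theorem MeasureTheory.Integrable.of_sq_add_sq {α : Type*} [MeasurableSpace α] {μ : Measure α}
    [IsFiniteMeasure μ] {f g : α → ℝ} (hf : AEStronglyMeasurable f μ)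
    (hg : AEStronglyMeasurable g μ) (h : Integrable (fun x ↦ f x ^ 2 + g x ^ 2) μ) :
    Integrable f μ ∧ Integrable g μ := by
  have of_sq_le {u : α → ℝ} (hu : AEStronglyMeasurable u μ)
      (hle : ∀ x, u x ^ 2 ≤ f x ^ 2 + g x ^ 2) : Integrable u μ :=
    ((memLp_two_iff_integrable_sq hu).2 <| h.mono' (hu.pow 2) <|
      ae_of_all _ fun x ↦ by simpa using hle x).integrable one_le_two
  exact ⟨of_sq_le hf fun x ↦ le_add_of_nonneg_right (sq_nonneg _),
    of_sq_le hg fun x ↦ le_add_of_nonneg_left (sq_nonneg _)⟩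

theorem dS_sq (x z : S) : dS x z ^ 2 = (x.1.1 ^ 2 + x.1.2.1 ^ 2)
    - 2 * (z.1.1 * x.1.1 + z.1.2.1 * x.1.2.1)
      - 4 * (cos z.1.2.2 * cos x.1.2.2 + sin z.1.2.2 * sin x.1.2.2)
    + (z.1.1 ^ 2 + z.1.2.1 ^ 2 + 4) := by
  rw [dS, sq_sqrt (by positivity)]
  linear_combination 2 * sin_sq_add_cos_sq x.1.2.2 + 2 * sin_sq_add_cos_sq z.1.2.2

section

variable {μ : Measure S} [IsFiniteMeasure μ]

theorem integrable_cos_angle : Integrable (fun x : S ↦ cos x.1.2.2) μ :=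
  .of_bound (by fun_prop) 1 (ae_of_all _ fun _ ↦ abs_cos_le_one _)

theorem integrable_sin_angle : Integrable (fun x : S ↦ sin x.1.2.2) μ :=
  .of_bound (by fun_prop) 1 (ae_of_all _ fun _ ↦ abs_sin_le_one _)

variable (hμ : Integrable (fun x : S ↦ x.1.1 ^ 2 + x.1.2.1 ^ 2) μ)
include hμ

theorem integrable_dS_sq (z : S) : Integrable (fun x ↦ dS x z ^ 2) μ := by
  obtain ⟨h₁, h₂⟩ := hμ.of_sq_add_sq (by fun_prop) (by fun_prop)
  have := integrable_cos_angle (μ := μ)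
  have := integrable_sin_angle (μ := μ)
  simp_rw [dS_sq]
  fun_prop

theorem FF_eq_ofReal_integral (z : S) : FF μ z = ENNReal.ofReal (∫ x, dS x z ^ 2 ∂μ) := by
  rw [FF, ofReal_integral_eq_lintegral_ofReal (integrable_dS_sq hμ z)
    (ae_of_all _ fun _ ↦ sq_nonneg _)]

end

theorem integral_dS_sq {μ : Measure S} [IsProbabilityMeasure μ]
    (hμ : Integrable (fun x : S ↦ x.1.1 ^ 2 + x.1.2.1 ^ 2) μ) (z : S) :
    ∫ x, dS x z ^ 2 ∂μ = ∫ x, (x.1.1 ^ 2 + x.1.2.1 ^ 2) ∂μ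
      - 2 * (z.1.1 * ∫ x, x.1.1 ∂μ + z.1.2.1 * ∫ x, x.1.2.1 ∂μ)
      - 4 * (cos z.1.2.2 * ∫ x, cos x.1.2.2 ∂μ + sin z.1.2.2 * ∫ x, sin x.1.2.2 ∂μ)
      + (z.1.1 ^ 2 + z.1.2.1 ^ 2 + 4) := by
  obtain ⟨h₁, h₂⟩ := hμ.of_sq_add_sq (by fun_prop) (by fun_prop)
  have hcos := integrable_cos_angle (μ := μ)
  have hsin := integrable_sin_angle (μ := μ)
  simp_rw [dS_sq]
  rw [integral_add (by fun_prop) (by fun_prop), integral_sub (by fun_prop) (by fun_prop),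
    integral_sub hμ (by fun_prop), integral_const_mul, integral_const_mul,
    integral_add (h₁.const_mul _) (h₂.const_mul _),
    integral_add (hcos.const_mul _) (hsin.const_mul _), integral_const_mul, integral_const_mul,
    integral_const_mul, integral_const_mul, integral_const, probReal_univ, one_smul]

/-- If `α = c̄² + s̄² > 0`, there is a unique `θ̂ ∈ [0, 2π)` with
`cos θ̂ = c̄/√α`, `sin θ̂ = s̄/√α`, and `(p̂₁, p̂₂, θ̂)` minimizes `F` over `S`. -/
theorem optimal_estimate_of_alpha_pos (μ : Measure S) [IsProbabilityMeasure μ]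
    (hmom : ∫⁻ x, ENNReal.ofReal (x.1.1 ^ 2 + x.1.2.1 ^ 2) ∂μ < ⊤)
    (p1 p2 cbar sbar : ℝ)
    (hp1 : p1 = ∫ x, x.1.1 ∂μ) (hp2 : p2 = ∫ x, x.1.2.1 ∂μ)
    (hc : cbar = ∫ x, Real.cos x.1.2.2 ∂μ) (hs : sbar = ∫ x, Real.sin x.1.2.2 ∂μ)
    (hα : 0 < cbar ^ 2 + sbar ^ 2) :
    (∃! θ : ℝ, θ ∈ Set.Ico (0 : ℝ) (2 * Real.pi) ∧
        Real.cos θ = cbar / Real.sqrt (cbar ^ 2 + sbar ^ 2) ∧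
        Real.sin θ = sbar / Real.sqrt (cbar ^ 2 + sbar ^ 2)) ∧
    (∀ xstar : S, xstar.1.1 = p1 → xstar.1.2.1 = p2 →
        Real.cos xstar.1.2.2 = cbar / Real.sqrt (cbar ^ 2 + sbar ^ 2) →
        Real.sin xstar.1.2.2 = sbar / Real.sqrt (cbar ^ 2 + sbar ^ 2) →
        ∀ y : S, FF μ xstar ≤ FF μ y) := by
  refine ⟨existsUnique_mem_Ico_cos_eq_sin_eq (div_sqrt_sq_add_div_sqrt_sq_eq_one hα), ?_⟩
  intro xstar hx₁ hx₂ hxc hxs y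
  have hμ : Integrable (fun x : S ↦ x.1.1 ^ 2 + x.1.2.1 ^ 2) μ :=
    (lintegral_ofReal_ne_top_iff_integrable (by fun_prop)
      (ae_of_all _ fun _ ↦ by positivity)).1 hmom.ne
  have hx := cos_mul_add_sin_mul_eq_sqrt hα hxc hxs
  have hy := cos_mul_add_sin_mul_le_sqrt y.1.2.2 cbar sbar
  rw [FF_eq_ofReal_integral hμ, FF_eq_ofReal_integral hμ]
  refine ENNReal.ofReal_le_ofReal ?_
  rw [integral_dS_sq hμ, integral_dS_sq hμ, ← hp1, ← hp2, ← hc, ← hs, hx₁, hx₂]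
  nlinarith [sq_nonneg (y.1.1 - p1), sq_nonneg (y.1.2.1 - p2)]

end
end

section
/- Suppose κ satisfies condition (i) of Assumption 1. Then for every j ∈ {k, …, N}, the function (x, x̂_{j:N}) ↦ G_j(x, x̂_{j:N}) is continuous on S × S^(N−j+1), where the product spaces carry the product metric; in particular G is continuous on S^(N−k+1). -/
/-! Truncating each stage cost `d(x, x̂_j)²` at `c'_j` makes it change by at most
`2 √c'_j · d(x̂_j, ŷ_j)` when `x̂_j` moves, so by induction `J*_j` is Lipschitz in the estimates,
uniformly in the state. Continuity in `x` comes from the setwise continuity of `κ`: by the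
layer-cake formula `∫ f dκ(x) = ∫₀^C κ(x){f > t} dt` for `0 ≤ f ≤ C`, and dominated convergence in
`t` makes `x ↦ ∫ f dκ(x)` continuous for every bounded measurable `f`, in particular for `J*_j`. -/

open MeasureTheory Filter
open scoped ENNReal NNReal Topology

noncomputable section

/-- The initial state `x₀ = (0,0,0)`. -/
def origin : S := ⟨(0, 0, 0), ⟨le_rfl, by positivity⟩⟩

/-- `κ` is a Markov kernel on `S`. -/
def IsMarkov (κ : S → Measure S) : Prop :=
  (∀ x, IsProbabilityMeasure (κ x)) ∧
    ∀ A : Set S, MeasurableSet A → Measurable fun x => κ x A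

/-- Continuity of a real-valued function with respect to the metric `dS`. -/
def DContinuous (g : S → ℝ) : Prop :=
  ∀ x : S, ∀ ε : ℝ, 0 < ε → ∃ δ : ℝ, 0 < δ ∧ ∀ y : S, dS x y < δ → |g y - g x| < ε

/-- Openness with respect to the metric `dS`. -/
def DOpen (O : Set S) : Prop :=
  ∀ x ∈ O, ∃ δ : ℝ, 0 < δ ∧ ∀ y : S, dS x y < δ → y ∈ O

/-- Assumption 1 on the kernel `κ`. -/
def Assumption1 (κ : S → Measure S) : Prop :=
  (∀ A : Set S, MeasurableSet A → DContinuous fun x => (κ x A).toReal) ∧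
    ∀ O : Set S, DOpen O → O.Nonempty → ∀ x : S, 0 < κ x O

/-- Auxiliary downward value recursion; the first argument is the number
`N + 1 - j` of remaining stages. -/
noncomputable def Jaux (κ : S → Measure S) (c' : ℕ → ℝ) (xhat : ℕ → S) :
    ℕ → ℕ → S → ℝ≥0∞
  | 0, _, _ => 0
  | m + 1, j, x =>
      min (ENNReal.ofReal (dS x (xhat j) ^ 2) + ∫⁻ y, Jaux κ c' xhat m (j + 1) y ∂(κ x))
        (ENNReal.ofReal (c' j))

/-- The optimal cost-to-go `J*_j(x, x̂_{j:N})`. -/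
noncomputable def JJ (κ : S → Measure S) (c' : ℕ → ℝ) (N : ℕ) (xhat : ℕ → S)
    (j : ℕ) (x : S) : ℝ≥0∞ :=
  Jaux κ c' xhat (N + 1 - j) j x

/-- `G_j(x, x̂_{j:N}) = ∫ J*_j(y, x̂_{j:N}) κ(x)(dy)`. -/
noncomputable def Gj (κ : S → Measure S) (c' : ℕ → ℝ) (N : ℕ) (xhat : ℕ → S)
    (j : ℕ) (x : S) : ℝ≥0∞ :=
  ∫⁻ y, JJ κ c' N xhat j y ∂(κ x)

/-- `G(x̂_{k:N}) = G_k(x₀, x̂_{k:N})`. -/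
noncomputable def Gtot (κ : S → Measure S) (c' : ℕ → ℝ) (k N : ℕ) (xhat : ℕ → S) : ℝ≥0∞ :=
  Gj κ c' N xhat k origin

/-- A randomized policy: a tuple of Borel measurable functions `f_j : S → [0,1]`. -/
def IsPolicy (k N : ℕ) (f : ℕ → S → ℝ≥0∞) : Prop :=
  ∀ j, k ≤ j → j ≤ N → Measurable (f j) ∧ ∀ x, f j x ≤ 1

/-- Auxiliary cost-to-go recursion for a policy; first argument is `N + 1 - j`. -/
noncomputable def Vaux (κ : S → Measure S) (c' : ℕ → ℝ) (xhat : ℕ → S)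
    (f : ℕ → S → ℝ≥0∞) : ℕ → ℕ → S → ℝ≥0∞
  | 0, _, _ => 0
  | m + 1, j, x =>
      f j x * (ENNReal.ofReal (dS x (xhat j) ^ 2) + ∫⁻ y, Vaux κ c' xhat f m (j + 1) y ∂(κ x))
        + (1 - f j x) * ENNReal.ofReal (c' j)

/-- The cost-to-go `V_j` of a policy `f` with estimates `x̂`. -/
noncomputable def VV (κ : S → Measure S) (c' : ℕ → ℝ) (N : ℕ) (xhat : ℕ → S)
    (f : ℕ → S → ℝ≥0∞) (j : ℕ) (x : S) : ℝ≥0∞ :=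
  Vaux κ c' xhat f (N + 1 - j) j x

/-- The total expected cost `C(f_{k:N}, x̂_{k:N})`. -/
noncomputable def Cost (κ : S → Measure S) (c' : ℕ → ℝ) (k N : ℕ) (xhat : ℕ → S)
    (f : ℕ → S → ℝ≥0∞) : ℝ≥0∞ :=
  ∫⁻ y, VV κ c' N xhat f k y ∂(κ origin)

/-- `f ∈ 𝔓(x̂_{k:N})`: `f` minimizes the cost over all randomized policies. -/
def inP (κ : S → Measure S) (c' : ℕ → ℝ) (k N : ℕ) (xhat : ℕ → S)
    (f : ℕ → S → ℝ≥0∞) : Prop :=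
  IsPolicy k N f ∧
    ∀ g : ℕ → S → ℝ≥0∞, IsPolicy k N g → Cost κ c' k N xhat f ≤ Cost κ c' k N xhat g

/-- `x̂ ∈ 𝔛(f_{k:N})`: the estimates minimize the cost for the policy `f`. -/
def inX (κ : S → Measure S) (c' : ℕ → ℝ) (k N : ℕ) (f : ℕ → S → ℝ≥0∞)
    (xhat : ℕ → S) : Prop :=
  ∀ yhat : ℕ → S, Cost κ c' k N xhat f ≤ Cost κ c' k N yhat f

/-- Conditioning a measure on "no transmission" at stage `j`. -/
noncomputable def condMeas (f : ℕ → S → ℝ≥0∞) (j : ℕ) (μ : Measure S) : Measure S :=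
  (∫⁻ x, f j x ∂μ)⁻¹ • μ.withDensity (f j)

/-- The predicted measures `μ_{j|j−1}`, by recursion on `j - k`. -/
noncomputable def mupredAux (κ : S → Measure S) (f : ℕ → S → ℝ≥0∞) (k : ℕ) :
    ℕ → Measure S
  | 0 => κ origin
  | n + 1 => (condMeas f (k + n) (mupredAux κ f k n)).bind κ

/-- `μ_{j|j−1}`. -/
noncomputable def mupred (κ : S → Measure S) (f : ℕ → S → ℝ≥0∞) (k j : ℕ) : Measure S :=
  mupredAux κ f k (j - k)

/-- `q_j = ∫ f_j dμ_{j|j−1}`. -/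
noncomputable def qq (κ : S → Measure S) (f : ℕ → S → ℝ≥0∞) (k j : ℕ) : ℝ≥0∞ :=
  ∫⁻ x, f j x ∂(mupred κ f k j)

/-- `μ_{j|j}`. -/
noncomputable def mucond (κ : S → Measure S) (f : ℕ → S → ℝ≥0∞) (k j : ℕ) : Measure S :=
  condMeas f j (mupred κ f k j)

/-- Non-degeneracy of a policy. -/
def NonDeg (κ : S → Measure S) (f : ℕ → S → ℝ≥0∞) (k N : ℕ) : Prop :=
  ∀ j, k ≤ j → j ≤ N → 0 < qq κ f k j

/-- The closed "no transmission" region `D̄_j`. -/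
noncomputable def Dbar (κ : S → Measure S) (c' : ℕ → ℝ) (N : ℕ) (xhat : ℕ → S)
    (j : ℕ) : Set S :=
  {x : S | ENNReal.ofReal (dS x (xhat j) ^ 2) + ∫⁻ y, JJ κ c' N xhat (j + 1) y ∂(κ x)
      ≤ ENNReal.ofReal (c' j)}

/-- The open "no transmission" region `Ḏ_j`. -/
noncomputable def Dund (κ : S → Measure S) (c' : ℕ → ℝ) (N : ℕ) (xhat : ℕ → S)
    (j : ℕ) : Set S :=
  {x : S | ENNReal.ofReal (dS x (xhat j) ^ 2) + ∫⁻ y, JJ κ c' N xhat (j + 1) y ∂(κ x)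
      < ENNReal.ofReal (c' j)}

/-- Hypothesis (H). -/
def HypH (κ : S → Measure S) (c' : ℕ → ℝ) (k N : ℕ) : Prop :=
  ∀ j, k ≤ j → j ≤ N → ∃ xhat : ℕ → S, (Dund κ c' N xhat j).Nonempty

/-- Weak convergence of measures on `(S, dS)`: tested against `dS`-continuous
bounded functions. -/
def WeakConvS (μl : ℕ → Measure S) (μ : Measure S) : Prop :=
  ∀ h : S → ℝ, DContinuous h → (∃ C : ℝ, ∀ x, |h x| ≤ C) →
    Tendsto (fun l => ∫ x, h x ∂(μl l)) atTop (𝓝 (∫ x, h x ∂μ))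

/-- Convergence of a sequence of (non-degenerate) policies to a policy. -/
def PolConv (κ : S → Measure S) (k N : ℕ) (g : ℕ → ℕ → S → ℝ≥0∞)
    (f : ℕ → S → ℝ≥0∞) : Prop :=
  ∀ j, k ≤ j → j ≤ N →
    WeakConvS (fun l => mucond κ (g l) k j) (mucond κ f k j) ∧
      Tendsto (fun l => qq κ (g l) k j) atTop (𝓝 (qq κ f k j))

theorem tendsto_lintegral_of_tendsto_measure {ι α : Type*} [MeasurableSpace α]
    {l : Filter ι} [l.IsCountablyGenerated] {μ : ι → Measure α} {ν : Measure α}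
    [IsFiniteMeasure ν] (hμ : ∀ s, MeasurableSet s → Tendsto (fun i => μ i s) l (𝓝 (ν s)))
    {f : α → ℝ≥0∞} (hf : Measurable f) {C : ℝ≥0∞} (hC : C ≠ ∞) (hfC : ∀ a, f a ≤ C) :
    Tendsto (fun i => ∫⁻ a, f a ∂μ i) l (𝓝 (∫⁻ a, f a ∂ν)) := by
  have layer_cake (ρ : Measure α) :
      ∫⁻ a, f a ∂ρ = ∫⁻ t in Set.Ioi 0, ρ {a | t < (f a).toReal} := by
    have hf_eq : ∀ a, ENNReal.ofReal (f a).toReal = f a := fun a =>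
      ENNReal.ofReal_toReal (ne_top_of_le_ne_top hC (hfC a))
    simpa only [hf_eq] using lintegral_eq_lintegral_meas_lt ρ
      (Eventually.of_forall fun a => ENNReal.toReal_nonneg) hf.ennreal_toReal.aemeasurable
  have h_empty : ∀ t, C.toReal < t → {a | t < (f a).toReal} = ∅ := fun t ht =>
    Set.eq_empty_of_forall_notMem fun a ha =>
      ((ENNReal.toReal_mono hC (hfC a)).trans_lt ht).not_gt ha
  have h_mass : ∀ᶠ i in l, μ i Set.univ ≤ ν Set.univ + 1 :=
    (hμ Set.univ MeasurableSet.univ).eventually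
      (ge_mem_nhds (ENNReal.lt_add_right (measure_ne_top ν _) one_ne_zero))
  simp_rw [layer_cake]
  refine tendsto_lintegral_filter_of_dominated_convergence
    ((Set.Iic C.toReal).indicator fun _ => ν Set.univ + 1)
    (Eventually.of_forall fun i => Antitone.measurable fun s t hst => measure_mono
      fun a (ha : t < _) => hst.trans_lt ha) ?_ ?_
    (Eventually.of_forall fun t => hμ _ (measurableSet_lt measurable_const hf.ennreal_toReal))
  · filter_upwards [h_mass] with i hi
    refine Eventually.of_forall fun t => ?_
    by_cases ht : t ≤ C.toReal
    · simpa [Set.indicator_of_mem (Set.mem_Iic.2 ht)] using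
        (measure_mono (Set.subset_univ _)).trans hi
    · simp [h_empty t (not_le.1 ht)]
  · rw [lintegral_indicator_const measurableSet_Iic, Measure.restrict_apply measurableSet_Iic]
    exact ENNReal.mul_ne_top (ENNReal.add_ne_top.2 ⟨measure_ne_top ν _, ENNReal.one_ne_top⟩)
      (ne_top_of_le_ne_top (measure_Icc_lt_top (a := 0) (b := C.toReal)).ne
        (measure_mono fun t ht => ⟨le_of_lt ht.2, ht.1⟩))

theorem lintegral_le_lintegral_add_of_le {α : Type*} [MeasurableSpace α] {μ : Measure α}
    [IsProbabilityMeasure μ] {f g : α → ℝ≥0∞} {c : ℝ≥0∞} (h : ∀ a, f a ≤ g a + c) :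
    ∫⁻ a, f a ∂μ ≤ ∫⁻ a, g a ∂μ + c :=
  (lintegral_mono h).trans_eq <| by
    rw [lintegral_add_right _ measurable_const, lintegral_const, measure_univ, mul_one]

theorem ENNReal.abs_toReal_sub_le {a b : ℝ≥0∞} {e : ℝ} (ha : a ≠ ∞) (hb : b ≠ ∞) (he : 0 ≤ e)
    (hab : a ≤ b + ENNReal.ofReal e) (hba : b ≤ a + ENNReal.ofReal e) :
    |a.toReal - b.toReal| ≤ e := by
  have h₁ := ENNReal.toReal_le_add hab hb ENNReal.ofReal_ne_top
  have h₂ := ENNReal.toReal_le_add hba ha ENNReal.ofReal_ne_top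
  rw [ENNReal.toReal_ofReal he] at h₁ h₂
  exact abs_sub_le_iff.2 ⟨by linarith, by linarith⟩

theorem ENNReal.min_min_add_eq (a s c : ℝ≥0∞) : min (min a c + s) c = min (a + s) c := by
  rcases le_total a c with h | h
  · rw [min_eq_left h]
  · rw [min_eq_right h, min_eq_right le_self_add, min_eq_right (h.trans le_self_add)]

theorem ENNReal.min_add_le_min_add {a b s t c e e' : ℝ≥0∞} (hab : min b c ≤ min a c + e)
    (hst : t ≤ s + e') : min (b + t) c ≤ min (a + s) c + (e + e') :=
  calc min (b + t) c = min (min b c + t) c := (ENNReal.min_min_add_eq b t c).symm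
    _ ≤ min (min a c + s + (e + e')) (c + (e + e')) := by
      refine min_le_min ?_ le_self_add
      calc min b c + t ≤ min a c + e + (s + e') := add_le_add hab hst
        _ = min a c + s + (e + e') := by ring
    _ = min (a + s) c + (e + e') := by rw [min_add_add_right, ENNReal.min_min_add_eq]

theorem Real.min_sq_le_min_sq_add {a b c : ℝ} (ha : 0 ≤ a) (hb : 0 ≤ b) :
    min (b ^ 2) c ≤ min (a ^ 2) c + 2 * √c * |a - b| := by
  rcases lt_or_ge c 0 with hc | hc
  · simp [Real.sqrt_eq_zero_of_nonpos hc.le, min_eq_right (hc.le.trans (sq_nonneg a)),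
      min_eq_right (hc.le.trans (sq_nonneg b))]
  obtain ⟨r, hr, rfl⟩ : ∃ r, 0 ≤ r ∧ c = r ^ 2 := ⟨√c, Real.sqrt_nonneg c, (Real.sq_sqrt hc).symm⟩
  rw [Real.sqrt_sq hr]
  rcases le_total r a with hra | hra
  · rw [min_eq_right (pow_le_pow_left₀ hr hra 2)]
    nlinarith [min_le_right (b ^ 2) (r ^ 2), abs_nonneg (a - b)]
  rw [min_eq_left (pow_le_pow_left₀ ha hra 2)]
  rcases le_total b a with hba | hba
  · nlinarith [min_le_left (b ^ 2) (r ^ 2), abs_nonneg (a - b), pow_le_pow_left₀ hb hba 2]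
  rcases le_total b r with hbr | hbr
  · rw [abs_of_nonpos (by linarith)]
    nlinarith [min_le_left (b ^ 2) (r ^ 2)]
  · rw [abs_of_nonpos (by linarith)]
    nlinarith [min_le_right (b ^ 2) (r ^ 2)]

def phiS (x : S) : EuclideanSpace ℝ (Fin 4) :=
  WithLp.toLp 2 ![x.1.1, x.1.2.1, √2 * Real.cos x.1.2.2, √2 * Real.sin x.1.2.2]

theorem dS_eq_dist (x y : S) : dS x y = dist (phiS x) (phiS y) := by
  rw [EuclideanSpace.dist_eq, dS, Fin.sum_univ_four]
  simp only [phiS, PiLp.toLp_apply, Matrix.cons_val_zero, Matrix.cons_val_one, Matrix.head_cons,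
    Matrix.cons_val_two, Matrix.tail_cons, Matrix.cons_val_three, Real.dist_eq, sq_abs]
  congr 1
  ring_nf
  rw [Real.sq_sqrt zero_le_two]
  ring

theorem dS_nonneg (x y : S) : 0 ≤ dS x y := Real.sqrt_nonneg _

theorem dS_self (x : S) : dS x x = 0 := by simp [dS]

theorem dS_comm (x y : S) : dS x y = dS y x := by rw [dS_eq_dist, dS_eq_dist, dist_comm]

theorem abs_dS_sub_dS_le (x a b : S) : |dS x a - dS x b| ≤ dS a b := by
  simpa only [dS_eq_dist, dist_comm (phiS x)] using abs_dist_sub_le (phiS a) (phiS b) (phiS x)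

theorem continuous_dS_left (a : S) : Continuous fun x : S => dS x a := by
  unfold dS; fun_prop

/-- `comap (dS x) (𝓝 0)` is the neighbourhood filter of `x` for `dS`, which is not the subspace
topology carried by `S`: there `θ = 0` and `θ → 2π` are far apart. -/
theorem dContinuous_iff_tendsto {g : S → ℝ} :
    DContinuous g ↔ ∀ x, Tendsto g (comap (dS x) (𝓝 0)) (𝓝 (g x)) := by
  refine forall_congr' fun x => ?_
  rw [(Metric.nhds_basis_ball.comap (dS x)).tendsto_iff Metric.nhds_basis_ball]
  simp only [Set.mem_preimage, Metric.mem_ball, Real.dist_eq, sub_zero,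
    abs_of_nonneg (dS_nonneg x _)]

theorem IsMarkov.measurable_lintegral {κ : S → Measure S} (hκ : IsMarkov κ) {f : S → ℝ≥0∞}
    (hf : Measurable f) : Measurable fun x => ∫⁻ y, f y ∂κ x :=
  hf.lintegral_kernel (κ := ⟨κ, Measure.measurable_of_measurable_coe κ hκ.2⟩)

theorem tendsto_measure_of_dContinuous {κ : S → Measure S} [∀ x, IsFiniteMeasure (κ x)]
    {A : Set S} (hA : DContinuous fun x => (κ x A).toReal) (x : S) :
    Tendsto (fun y => κ y A) (comap (dS x) (𝓝 0)) (𝓝 (κ x A)) := by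
  simpa only [ENNReal.ofReal_toReal (measure_ne_top _ _)] using
    ENNReal.tendsto_ofReal (dContinuous_iff_tendsto.1 hA x)

section Jaux

variable {κ : S → Measure S} {c' : ℕ → ℝ}

theorem Jaux_le_ofReal (xhat : ℕ → S) (m j : ℕ) (x : S) :
    Jaux κ c' xhat m j x ≤ ENNReal.ofReal (c' j) := by
  cases m with
  | zero => exact zero_le
  | succ m => exact min_le_right _ _

theorem measurable_Jaux (hκ : IsMarkov κ) (xhat : ℕ → S) (m j : ℕ) :
    Measurable (Jaux κ c' xhat m j) := by
  induction m generalizing j with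
  | zero => exact measurable_const
  | succ m ih =>
    exact ((ENNReal.measurable_ofReal.comp ((continuous_dS_left _).pow 2).measurable).add
      (hκ.measurable_lintegral (ih (j + 1)))).min measurable_const

theorem min_ofReal_dS_sq_le (x a b : S) (c : ℝ) :
    min (ENNReal.ofReal (dS x b ^ 2)) (ENNReal.ofReal c)
      ≤ min (ENNReal.ofReal (dS x a ^ 2)) (ENNReal.ofReal c)
        + ENNReal.ofReal (2 * √c * dS a b) := by
  rw [← ENNReal.ofReal_min, ← ENNReal.ofReal_min]
  refine (ENNReal.ofReal_le_ofReal ((Real.min_sq_le_min_sq_add (dS_nonneg x a)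
    (dS_nonneg x b)).trans ?_)).trans ENNReal.ofReal_add_le
  gcongr
  exact abs_dS_sub_dS_le x a b

theorem Jaux_le_add [∀ x, IsProbabilityMeasure (κ x)] (xhat yhat : ℕ → S) (m j : ℕ) (x : S) :
    Jaux κ c' yhat m j x ≤ Jaux κ c' xhat m j x
      + ENNReal.ofReal (∑ l ∈ Finset.Ico j (j + m), 2 * √(c' l) * dS (xhat l) (yhat l)) := by
  induction m generalizing j x with
  | zero => simp [Jaux]
  | succ m ih =>
    rw [Finset.sum_eq_sum_Ico_succ_bot (by omega), show j + (m + 1) = j + 1 + m by ring,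
      ENNReal.ofReal_add (mul_nonneg (by positivity) (dS_nonneg _ _))
        (Finset.sum_nonneg fun l _ => mul_nonneg (by positivity) (dS_nonneg _ _))]
    exact ENNReal.min_add_le_min_add (min_ofReal_dS_sq_le x _ _ _)
      (lintegral_le_lintegral_add_of_le fun y => ih (j + 1) y)

end Jaux

section Gj

variable {κ : S → Measure S} {c' : ℕ → ℝ} {N : ℕ}

theorem Gj_le_ofReal [∀ x, IsProbabilityMeasure (κ x)] (xhat : ℕ → S) (j : ℕ) (x : S) :
    Gj κ c' N xhat j x ≤ ENNReal.ofReal (c' j) :=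
  (lintegral_mono fun y => Jaux_le_ofReal xhat _ j y).trans_eq (by simp)

theorem Gj_ne_top [∀ x, IsProbabilityMeasure (κ x)] (xhat : ℕ → S) (j : ℕ) (x : S) :
    Gj κ c' N xhat j x ≠ ∞ :=
  ne_top_of_le_ne_top ENNReal.ofReal_ne_top (Gj_le_ofReal xhat j x)

theorem abs_toReal_Gj_sub_le [∀ x, IsProbabilityMeasure (κ x)] (xhat yhat : ℕ → S) (j : ℕ)
    (x : S) :
    |(Gj κ c' N yhat j x).toReal - (Gj κ c' N xhat j x).toReal|
      ≤ ∑ l ∈ Finset.Icc j N, 2 * √(c' l) * dS (xhat l) (yhat l) := by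
  have hIcc : Finset.Ico j (j + (N + 1 - j)) = Finset.Icc j N := by
    ext l; simp only [Finset.mem_Ico, Finset.mem_Icc]; omega
  have h (xhat yhat : ℕ → S) : Gj κ c' N yhat j x ≤ Gj κ c' N xhat j x
      + ENNReal.ofReal (∑ l ∈ Finset.Icc j N, 2 * √(c' l) * dS (xhat l) (yhat l)) := by
    rw [← hIcc]
    exact lintegral_le_lintegral_add_of_le fun y => Jaux_le_add xhat yhat _ j y
  refine ENNReal.abs_toReal_sub_le (Gj_ne_top _ _ _) (Gj_ne_top _ _ _)
    (Finset.sum_nonneg fun l _ => mul_nonneg (by positivity) (dS_nonneg _ _)) (h xhat yhat) ?_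
  simpa only [dS_comm (yhat _)] using h yhat xhat

theorem dContinuous_toReal_Gj (hκ : IsMarkov κ)
    (hcont : ∀ A : Set S, MeasurableSet A → DContinuous fun x => (κ x A).toReal)
    (xhat : ℕ → S) (j : ℕ) : DContinuous fun x => (Gj κ c' N xhat j x).toReal := by
  have := hκ.1
  refine dContinuous_iff_tendsto.2 fun x => (ENNReal.tendsto_toReal (Gj_ne_top _ _ _)).comp ?_
  exact tendsto_lintegral_of_tendsto_measure
    (fun A hA => tendsto_measure_of_dContinuous (hcont A hA) x) (measurable_Jaux hκ _ _ _)
    ENNReal.ofReal_ne_top (Jaux_le_ofReal xhat _ j)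

end Gj

theorem exists_pos_abs_toReal_Gj_sub_lt {κ : S → Measure S} (hκ : IsMarkov κ)
    (hcont : ∀ A : Set S, MeasurableSet A → DContinuous fun x => (κ x A).toReal)
    (c' : ℕ → ℝ) (N j : ℕ) (x : S) (xhat : ℕ → S) {ε : ℝ} (hε : 0 < ε) :
    ∃ δ : ℝ, 0 < δ ∧ ∀ (y : S) (yhat : ℕ → S),
      √(dS x y ^ 2 + ∑ l ∈ Finset.Icc j N, dS (xhat l) (yhat l) ^ 2) < δ →
      |(Gj κ c' N yhat j y).toReal - (Gj κ c' N xhat j x).toReal| < ε := by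
  have := hκ.1
  obtain ⟨δ₁, hδ₁, hx⟩ := dContinuous_toReal_Gj hκ hcont xhat j x (ε / 2) (half_pos hε)
  set L := ∑ l ∈ Finset.Icc j N, 2 * √(c' l)
  have hL : 0 ≤ L := Finset.sum_nonneg fun l _ => by positivity
  refine ⟨min δ₁ (ε / (2 * (L + 1))), by positivity, fun y yhat hD => ?_⟩
  set D := √(dS x y ^ 2 + ∑ l ∈ Finset.Icc j N, dS (xhat l) (yhat l) ^ 2)
  have hsum : 0 ≤ ∑ l ∈ Finset.Icc j N, dS (xhat l) (yhat l) ^ 2 :=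
    Finset.sum_nonneg fun l _ => sq_nonneg _
  have hxy : dS x y ≤ D := Real.le_sqrt_of_sq_le (le_add_of_nonneg_right hsum)
  have hhat : ∀ l ∈ Finset.Icc j N, dS (xhat l) (yhat l) ≤ D := fun l hl =>
    Real.le_sqrt_of_sq_le ((Finset.single_le_sum (fun i _ => sq_nonneg (dS (xhat i) (yhat i)))
      hl).trans (le_add_of_nonneg_left (sq_nonneg _)))
  have hLD : L * D < ε / 2 := by
    have hD' := (lt_div_iff₀ (by positivity)).1 (hD.trans_le (min_le_right _ _))
    nlinarith [Real.sqrt_nonneg (dS x y ^ 2 + ∑ l ∈ Finset.Icc j N, dS (xhat l) (yhat l) ^ 2)]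
  calc |(Gj κ c' N yhat j y).toReal - (Gj κ c' N xhat j x).toReal|
      ≤ |(Gj κ c' N yhat j y).toReal - (Gj κ c' N xhat j y).toReal|
        + |(Gj κ c' N xhat j y).toReal - (Gj κ c' N xhat j x).toReal| := abs_sub_le _ _ _
    _ < L * D + ε / 2 := by
      refine add_lt_add_of_le_of_lt ((abs_toReal_Gj_sub_le xhat yhat j y).trans ?_)
        (hx y (hxy.trans_lt (hD.trans_le (min_le_left _ _))))
      rw [Finset.sum_mul]
      exact Finset.sum_le_sum fun l hl => mul_le_mul_of_nonneg_left (hhat l hl) (by positivity)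
    _ < ε := by linarith

theorem Gj_continuous_general (κ : S → Measure S) (hκ : IsMarkov κ)
    (hcont : ∀ A : Set S, MeasurableSet A → DContinuous fun x => (κ x A).toReal)
    (k N : ℕ) (c' : ℕ → ℝ) :
    (∀ j, k ≤ j → j ≤ N →
      ∀ (x : S) (xhat : ℕ → S), ∀ ε : ℝ, 0 < ε → ∃ δ : ℝ, 0 < δ ∧
        ∀ (y : S) (yhat : ℕ → S),
          Real.sqrt (dS x y ^ 2 + ∑ l ∈ Finset.Icc j N, dS (xhat l) (yhat l) ^ 2) < δ →
          |(Gj κ c' N yhat j y).toReal - (Gj κ c' N xhat j x).toReal| < ε) ∧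
    (∀ xhat : ℕ → S, ∀ ε : ℝ, 0 < ε → ∃ δ : ℝ, 0 < δ ∧
        ∀ yhat : ℕ → S,
          Real.sqrt (∑ l ∈ Finset.Icc k N, dS (xhat l) (yhat l) ^ 2) < δ →
          |(Gtot κ c' k N yhat).toReal - (Gtot κ c' k N xhat).toReal| < ε) := by
  refine ⟨fun j _ _ x xhat ε hε => exists_pos_abs_toReal_Gj_sub_lt hκ hcont c' N j x xhat hε,
    fun xhat ε hε => ?_⟩
  obtain ⟨δ, hδ, h⟩ := exists_pos_abs_toReal_Gj_sub_lt hκ hcont c' N k origin xhat hε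
  exact ⟨δ, hδ, fun yhat hD => h origin yhat (by simpa [dS_self] using hD)⟩

/-- Under Assumption 1(i), each `G_j` is continuous on `S × S^(N−j+1)` with the
product metric; in particular `G` is continuous on `S^(N−k+1)`. -/
theorem Gj_continuous (κ : S → Measure S) (hκ : IsMarkov κ)
    (hcont : ∀ A : Set S, MeasurableSet A → DContinuous fun x => (κ x A).toReal)
    (k N : ℕ) (hkN : k ≤ N) (c' : ℕ → ℝ) (hc' : ∀ j, k ≤ j → j ≤ N → 0 < c' j) :
    (∀ j, k ≤ j → j ≤ N →
      ∀ (x : S) (xhat : ℕ → S), ∀ ε : ℝ, 0 < ε → ∃ δ : ℝ, 0 < δ ∧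
        ∀ (y : S) (yhat : ℕ → S),
          Real.sqrt (dS x y ^ 2 + ∑ l ∈ Finset.Icc j N, dS (xhat l) (yhat l) ^ 2) < δ →
          |(Gj κ c' N yhat j y).toReal - (Gj κ c' N xhat j x).toReal| < ε) ∧
    (∀ xhat : ℕ → S, ∀ ε : ℝ, 0 < ε → ∃ δ : ℝ, 0 < δ ∧
        ∀ yhat : ℕ → S,
          Real.sqrt (∑ l ∈ Finset.Icc k N, dS (xhat l) (yhat l) ^ 2) < δ →
          |(Gtot κ c' k N yhat).toReal - (Gtot κ c' k N xhat).toReal| < ε) :=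
  Gj_continuous_general κ hκ hcont k N c'
end
end

section
/- Let x̂_{k:N} ∈ S^(N−k+1). (a) For every randomized policy f_{k:N}, every j ∈ {k, …, N} and every x ∈ S, V_j(x) ≥ J*_j(x, x̂_{j:N}); consequently C(f_{k:N}, x̂_{k:N}) ≥ G(x̂_{k:N}). (b) If for each j the function f_j is the indicator of a Borel set 𝔻_j with Ḏ_j ⊆ 𝔻_j ⊆ D̄_j (that is, f_j = 1 on 𝔻_j and f_j = 0 elsewhere), then V_j(x) = J*_j(x, x̂_{j:N}) for every j and x; hence C(f_{k:N}, x̂_{k:N}) = G(x̂_{k:N}) and this threshold policy belongs to 𝔓(x̂_{k:N}). -/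
open MeasureTheory Filter
open scoped ENNReal NNReal Topology

noncomputable section

/-!
This is backward dynamic programming. At each stage a randomized policy pays a convex
combination `f (d² + E V) + (1 - f) c'` of the two one-step costs, which is at least their
minimum, and the minimum is what `J*` pays; by backward induction `J* ≤ V`. A threshold policy
puts all its weight on the smaller of the two costs (on `D̄_j \ Ḏ_j` they coincide), so
the convex combination equals the minimum at every stage, and `V = J*`.
-/

@[elab_as_elim]
lemma Nat.backward_induction {k N : ℕ} {P : ℕ → Prop} (h_last : ∀ j, N < j → P j)
    (h_step : ∀ j, k ≤ j → j ≤ N → P (j + 1) → P j) (j : ℕ) (hkj : k ≤ j) : P j := by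
  rcases le_or_gt j N with hjN | hNj
  · exact Nat.decreasingInduction' (fun i hiN hji => h_step i (hkj.trans hji) (by omega))
      (Nat.le_succ_of_le hjN) (h_last _ N.lt_succ_self)
  · exact h_last j hNj

namespace ENNReal

lemma min_le_mul_add_one_sub_mul {a A C : ℝ≥0∞} (ha : a ≤ 1) :
    min A C ≤ a * A + (1 - a) * C :=
  calc min A C = a * min A C + (1 - a) * min A C := by
        rw [← add_mul, add_tsub_cancel_of_le ha, one_mul]
    _ ≤ a * A + (1 - a) * C := by gcongr <;> simp

lemma indicator_mul_add_one_sub_indicator_mul {α : Type*} {s : Set α} {x : α} {A C : ℝ≥0∞}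
    (h_mem : x ∈ s → A ≤ C) (h_not_mem : x ∉ s → C ≤ A) :
    s.indicator (fun _ => 1) x * A + (1 - s.indicator (fun _ => 1) x) * C = min A C := by
  by_cases hx : x ∈ s
  · simp [hx, min_eq_left (h_mem hx)]
  · simp [hx, min_eq_right (h_not_mem hx)]

end ENNReal

section CostToGo

variable {κ : S → Measure S} {c' : ℕ → ℝ} {N : ℕ} {xhat : ℕ → S} {f : ℕ → S → ℝ≥0∞}
  {j : ℕ} {x : S}

lemma JJ_of_lt (hNj : N < j) : JJ κ c' N xhat j x = 0 := by
  rw [JJ, Nat.sub_eq_zero_of_le hNj, Jaux]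

lemma VV_of_lt (hNj : N < j) : VV κ c' N xhat f j x = 0 := by
  rw [VV, Nat.sub_eq_zero_of_le hNj, Vaux]

lemma JJ_of_le (hjN : j ≤ N) :
    JJ κ c' N xhat j x =
      min (ENNReal.ofReal (dS x (xhat j) ^ 2) + ∫⁻ y, JJ κ c' N xhat (j + 1) y ∂(κ x))
        (ENNReal.ofReal (c' j)) := by
  unfold JJ
  rw [show N + 1 - j = (N - j) + 1 by omega, Jaux, show N + 1 - (j + 1) = N - j by omega]

lemma VV_of_le (hjN : j ≤ N) :
    VV κ c' N xhat f j x =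
      f j x * (ENNReal.ofReal (dS x (xhat j) ^ 2) + ∫⁻ y, VV κ c' N xhat f (j + 1) y ∂(κ x))
        + (1 - f j x) * ENNReal.ofReal (c' j) := by
  unfold VV
  rw [show N + 1 - j = (N - j) + 1 by omega, Vaux, show N + 1 - (j + 1) = N - j by omega]

lemma JJ_le_VV {k : ℕ} (hf : ∀ i, k ≤ i → i ≤ N → ∀ x, f i x ≤ 1) (hkj : k ≤ j) (x : S) :
    JJ κ c' N xhat j x ≤ VV κ c' N xhat f j x := by
  revert x
  refine Nat.backward_induction (fun i hNi x => by rw [JJ_of_lt hNi, VV_of_lt hNi]) ?_ j hkj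
  intro i hki hiN ih x
  rw [JJ_of_le hiN, VV_of_le hiN]
  calc _ ≤ min (ENNReal.ofReal (dS x (xhat i) ^ 2) + ∫⁻ y, VV κ c' N xhat f (i + 1) y ∂(κ x))
          (ENNReal.ofReal (c' i)) := by gcongr with y; exact ih y
    _ ≤ _ := ENNReal.min_le_mul_add_one_sub_mul (hf i hki hiN x)

lemma VV_eq_JJ_of_threshold {k : ℕ} {D : ℕ → Set S}
    (hD : ∀ i, k ≤ i → i ≤ N → Dund κ c' N xhat i ⊆ D i ∧ D i ⊆ Dbar κ c' N xhat i)
    (hkj : k ≤ j) (x : S) :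
    VV κ c' N xhat (fun i => (D i).indicator fun _ => 1) j x = JJ κ c' N xhat j x := by
  revert x
  refine Nat.backward_induction (fun i hNi x => by rw [JJ_of_lt hNi, VV_of_lt hNi]) ?_ j hkj
  intro i hki hiN ih x
  rw [JJ_of_le hiN, VV_of_le hiN, lintegral_congr ih]
  exact ENNReal.indicator_mul_add_one_sub_indicator_mul (fun hx => (hD i hki hiN).2 hx)
    (fun hx => not_lt.1 fun hlt => hx ((hD i hki hiN).1 hlt))

lemma Gtot_le_Cost {k : ℕ} (hf : IsPolicy k N f) : Gtot κ c' k N xhat ≤ Cost κ c' k N xhat f :=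
  lintegral_mono (JJ_le_VV (fun i hki hiN => (hf i hki hiN).2) le_rfl)

lemma Cost_eq_Gtot_of_threshold {k : ℕ} {D : ℕ → Set S}
    (hD : ∀ i, k ≤ i → i ≤ N → Dund κ c' N xhat i ⊆ D i ∧ D i ⊆ Dbar κ c' N xhat i) :
    Cost κ c' k N xhat (fun i => (D i).indicator fun _ => 1) = Gtot κ c' k N xhat :=
  lintegral_congr (VV_eq_JJ_of_threshold hD le_rfl)

end CostToGo

lemma isPolicy_indicator {k N : ℕ} {D : ℕ → Set S}
    (hD : ∀ j, k ≤ j → j ≤ N → MeasurableSet (D j)) :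
    IsPolicy k N fun j => (D j).indicator fun _ => 1 :=
  fun j hkj hjN => ⟨measurable_const.indicator (hD j hkj hjN),
    fun x => Set.indicator_le_self' (fun _ _ => zero_le_one) x⟩

theorem threshold_policies_optimal_general (κ : S → Measure S) (k N : ℕ) (c' : ℕ → ℝ) (xhat : ℕ → S) :
    -- (a)
    (∀ f : ℕ → S → ℝ≥0∞, IsPolicy k N f →
      (∀ j, k ≤ j → j ≤ N → ∀ x : S, JJ κ c' N xhat j x ≤ VV κ c' N xhat f j x) ∧
        Gtot κ c' k N xhat ≤ Cost κ c' k N xhat f) ∧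
    -- (b)
    (∀ (D : ℕ → Set S) (f : ℕ → S → ℝ≥0∞),
      (∀ j, k ≤ j → j ≤ N → MeasurableSet (D j)) →
      (∀ j, k ≤ j → j ≤ N → Dund κ c' N xhat j ⊆ D j ∧ D j ⊆ Dbar κ c' N xhat j) →
      (∀ j, f j = (D j).indicator fun _ => 1) →
      (∀ j, k ≤ j → j ≤ N → ∀ x : S, VV κ c' N xhat f j x = JJ κ c' N xhat j x) ∧
        Cost κ c' k N xhat f = Gtot κ c' k N xhat ∧
        inP κ c' k N xhat f) := by
  have lower_bound : ∀ f, IsPolicy k N f →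
      (∀ j, k ≤ j → j ≤ N → ∀ x : S, JJ κ c' N xhat j x ≤ VV κ c' N xhat f j x) ∧
        Gtot κ c' k N xhat ≤ Cost κ c' k N xhat f := fun f hf =>
    ⟨fun _ hkj _ => JJ_le_VV (fun i hki hiN => (hf i hki hiN).2) hkj, Gtot_le_Cost hf⟩
  refine ⟨lower_bound, fun D f hDmeas hD hf => ?_⟩
  obtain rfl : f = fun j => (D j).indicator fun _ => 1 := funext hf
  have hcost := Cost_eq_Gtot_of_threshold hD
  exact ⟨fun _ hkj _ => VV_eq_JJ_of_threshold hD hkj, hcost, isPolicy_indicator hDmeas,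
    fun g hg => hcost ▸ (lower_bound g hg).2⟩

/-- (a) Every randomized policy has cost-to-go at least `J*`, so its total cost is
at least `G(x̂_{k:N})`. (b) Any threshold policy given by sets `Ḏ_j ⊆ 𝔻_j ⊆ D̄_j`
achieves `V_j = J*_j`, has cost `G(x̂_{k:N})`, and belongs to `𝔓(x̂_{k:N})`. -/
theorem threshold_policies_optimal (κ : S → Measure S) (hκ : IsMarkov κ)
    (k N : ℕ) (hkN : k ≤ N) (c' : ℕ → ℝ) (hc' : ∀ j, k ≤ j → j ≤ N → 0 < c' j)
    (xhat : ℕ → S) :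
    -- (a)
    (∀ f : ℕ → S → ℝ≥0∞, IsPolicy k N f →
      (∀ j, k ≤ j → j ≤ N → ∀ x : S, JJ κ c' N xhat j x ≤ VV κ c' N xhat f j x) ∧
        Gtot κ c' k N xhat ≤ Cost κ c' k N xhat f) ∧
    -- (b)
    (∀ (D : ℕ → Set S) (f : ℕ → S → ℝ≥0∞),
      (∀ j, k ≤ j → j ≤ N → MeasurableSet (D j)) →
      (∀ j, k ≤ j → j ≤ N → Dund κ c' N xhat j ⊆ D j ∧ D j ⊆ Dbar κ c' N xhat j) →
      (∀ j, f j = (D j).indicator fun _ => 1) →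
      (∀ j, k ≤ j → j ≤ N → ∀ x : S, VV κ c' N xhat f j x = JJ κ c' N xhat j x) ∧
        Cost κ c' k N xhat f = Gtot κ c' k N xhat ∧
        inP κ c' k N xhat f) :=
  threshold_policies_optimal_general κ k N c' xhat

end
end
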